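/- arXiv:1010.4249 — 4 statements merged into one kernel-verified Lean document; each statement's English description precedes it below -/
import Mathlib

section
/- Let p be a positive n-dimensional real vector and M a non-negative n×n matrix that is q-approximately symmetric (i.e., M i j ≤ q · M j i for all i, j, with q ≥ 0) and satisfies (M·p) i ≤ p i for every index i. Then the sum of all entries of M is at most (q+1)·n. -/
/-!
Split each row of `M` into the columns `j` with `p i ≤ p j` and the rest. On the first part,
`M i j * p i ≤ M i j * p j`, so `M p ≤ p` bounds its row mass by `1`, and these parts add up
to at most `n`. Approximate symmetry moves every entry of the second part across the diagonal
at a cost of a factor `q`, where it lands in the first part of another row.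
-/

open Finset

variable {ι : Type*} [Fintype ι]

lemma sum_row_of_le_le_one {M : Matrix ι ι ℝ} {p : ι → ℝ} {i : ι} (hp : ∀ j, 0 < p j)
    (hM : ∀ j, 0 ≤ M i j) (hMp : ∑ j, M i j * p j ≤ p i) :
    ∑ j with p i ≤ p j, M i j ≤ 1 := by
  rw [← mul_le_mul_iff_left₀ (hp i), one_mul, sum_mul]
  calc ∑ j with p i ≤ p j, M i j * p i
      ≤ ∑ j with p i ≤ p j, M i j * p j :=
        sum_le_sum fun j hj => mul_le_mul_of_nonneg_left (mem_filter.mp hj).2 (hM j)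
    _ ≤ ∑ j, M i j * p j :=
        sum_le_sum_of_subset_of_nonneg (filter_subset _ _)
          fun j _ _ => mul_nonneg (hM j) (hp j).le
    _ ≤ p i := hMp

lemma sum_of_lt_le_mul_sum_of_le {α : Type*} [LinearOrder α] {M : Matrix ι ι ℝ} {p : ι → α}
    {q : ℝ} (hM : ∀ i j, 0 ≤ M i j) (hq : 0 ≤ q) (hsymm : ∀ i j, M i j ≤ q * M j i) :
    ∑ i, ∑ j with p j < p i, M i j ≤ q * ∑ i, ∑ j with p i ≤ p j, M i j := by
  calc ∑ i, ∑ j with p j < p i, M i j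
      ≤ ∑ i, ∑ j with p j < p i, q * M j i := by gcongr with i _ j; exact hsymm i j
    _ = q * ∑ j, ∑ i with p j < p i, M j i := by
        simp only [← mul_sum]
        rw [sum_comm' (t' := univ) (s' := fun j => {i | p j < p i})]
        simp
    _ ≤ q * ∑ j, ∑ i with p j ≤ p i, M j i := by
        gcongr with j _ i _
        · exact fun i _ _ => hM j i
        · exact le_of_lt

/-- Lemma (nearly-symmetric matrices): if `p` is positive, `M` is nonnegative,
`q`-approximately symmetric and `M·p ≤ p` entrywise, then the sum of all entries
of `M` is at most `(q+1)·n`. -/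
theorem sum_entries_of_approx_symm (n : ℕ) (M : Matrix (Fin n) (Fin n) ℝ)
    (p : Fin n → ℝ) (hp : ∀ i, 0 < p i)
    (hM : ∀ i j, 0 ≤ M i j) (q : ℝ) (hq : 0 ≤ q)
    (hsymm : ∀ i j, M i j ≤ q * M j i)
    (hMp : ∀ i, ∑ j, M i j * p j ≤ p i) :
    ∑ i, ∑ j, M i j ≤ (q + 1) * n := by
  have h_upper : ∑ i, ∑ j with p i ≤ p j, M i j ≤ n := by
    simpa using sum_le_sum fun i (_ : i ∈ univ) => sum_row_of_le_le_one hp (hM i) (hMp i)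
  calc ∑ i, ∑ j, M i j
      = ∑ i, ∑ j with p i ≤ p j, M i j + ∑ i, ∑ j with p j < p i, M i j := by
        simp only [← sum_add_distrib, ← not_le, sum_filter_add_sum_filter_not]
    _ ≤ ∑ i, ∑ j with p i ≤ p j, M i j + q * ∑ i, ∑ j with p i ≤ p j, M i j := by
        gcongr
        exact sum_of_lt_le_mul_sum_of_le hM hq hsymm
    _ = (q + 1) * ∑ i, ∑ j with p i ≤ p j, M i j := by ring
    _ ≤ (q + 1) * n := by gcongr
end

section
/- (Guard construction distance bound) Let x, y, b be links in a metric space where the set {x, y, b} satisfies the 3^α-signal separation d(s_y, r_b) · d(s_b, r_y) ≥ 9 · ℓ_y · ℓ_b. Let r ∈ X be a point (a red sender s_r) with d(s_x, s_r) = d, d(s_b, s_r) ≥ d, d(r_y, s_r) ≤ d(r_b, s_r), and d(s_y, s_r) ≥ d. Then d(s_r, r_b) ≥ d/2. -/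
/-!
If the red sender `s_r` were within `d/2` of both blue receivers, then each blue link would be
longer than `d/2` (its sender is at distance `≥ d` from `s_r`), while each cross distance
`d(s_y, r_b)`, `d(s_b, r_y)` exceeds the corresponding link length by less than `d`. Each cross
distance is then less than three times its link length, contradicting the signal separation.
-/

theorem dist_lt_three_mul_dist_of_lt_half {X : Type*} [PseudoMetricSpace X] {s r r' p : X}
    {d : ℝ} (hs : d ≤ dist s p) (hr : dist r p < d / 2) (hr' : dist r' p < d / 2) : dist s r' < 3 * dist s r := by
  have hlink : d / 2 < dist s r := by linarith [dist_triangle s r p]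
  have hcross : dist s r' ≤ dist s r + dist r p + dist p r' := dist_triangle4 s r p r'
  linarith [dist_comm p r']

theorem guard_distance_bound_general {X : Type*} [MetricSpace X]
    (s_r s_y r_y s_b r_b : X) (d : ℝ)
    (hb : d ≤ dist s_b s_r)
    (hy_recv : dist r_y s_r ≤ dist r_b s_r)
    (hy_send : d ≤ dist s_y s_r)
    (hsignal : 9 * (dist s_y r_y * dist s_b r_b) ≤ dist s_y r_b * dist s_b r_y) :
    d / 2 ≤ dist s_r r_b := by
  by_contra! hclose
  have hrb : dist r_b s_r < d / 2 := by rwa [dist_comm]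
  have hry : dist r_y s_r < d / 2 := hy_recv.trans_lt hrb
  refine hsignal.not_gt ?_
  calc dist s_y r_b * dist s_b r_y
      < (3 * dist s_y r_y) * (3 * dist s_b r_b) :=
        mul_lt_mul'' (dist_lt_three_mul_dist_of_lt_half hy_send hry hrb)
          (dist_lt_three_mul_dist_of_lt_half hb hrb hry) dist_nonneg dist_nonneg
    _ = 9 * (dist s_y r_y * dist s_b r_b) := by ring

/-- Guard-construction distance bound from the Red-Blue Lemma: with the guard
hypotheses and the `3^α`-signal separation between the blue links `y` and `b`,
the red sender is at distance at least `d/2` from the blue receiver `r_b`. -/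
theorem guard_distance_bound {X : Type*} [MetricSpace X]
    (s_r s_x s_y r_y s_b r_b : X) (d : ℝ) (hd : d = dist s_x s_r)
    (hb : d ≤ dist s_b s_r)
    (hy_recv : dist r_y s_r ≤ dist r_b s_r)
    (hy_send : d ≤ dist s_y s_r)
    (hsignal : 9 * (dist s_y r_y * dist s_b r_b) ≤ dist s_y r_b * dist s_b r_y) :
    d / 2 ≤ dist s_r r_b :=
  guard_distance_bound_general s_r s_y r_y s_b r_b d hb hy_recv hy_send hsignal
end

section
/- (Equilength links have approximately symmetric affectance) Let ℓ_u, ℓ_v be links with ℓ_v/2 ≤ ℓ_u ≤ 2·ℓ_v in a metric space, and suppose d(s_v, r_u) ≥ 2(ℓ_u + ℓ_v). Then d(s_u, r_v) ≥ d(s_v, r_u)/2 and d(s_v, r_u) ≥ 2·d(s_u, r_v)/3, and consequently for uniform power (ℓ_v/d(s_u,r_v))^α ≤ 4^α · (ℓ_u/d(s_v,r_u))^α for any α > 0. -/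
/-- Nearly equilength links have approximately symmetric (uniform-power) affectance:
if `ℓ_v/2 ≤ ℓ_u ≤ 2 ℓ_v` and `d_{vu} ≥ 2(ℓ_u + ℓ_v)`, then
`d_{uv} ≥ d_{vu}/2`, `d_{vu} ≥ 2 d_{uv}/3`, and
`(ℓ_v/d_{uv})^α ≤ 4^α (ℓ_u/d_{vu})^α` for any `α > 0`. -/
theorem equilength_symmetric_affectance {X : Type*} [MetricSpace X]
    (s_u r_u s_v r_v : X) (α : ℝ) (hα : 0 < α)
    (hlu_pos : 0 < dist s_u r_u) (hlv_pos : 0 < dist s_v r_v)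
    (h1 : dist s_v r_v / 2 ≤ dist s_u r_u)
    (h2 : dist s_u r_u ≤ 2 * dist s_v r_v)
    (hfar : 2 * (dist s_u r_u + dist s_v r_v) ≤ dist s_v r_u) :
    dist s_v r_u / 2 ≤ dist s_u r_v ∧
      2 * dist s_u r_v / 3 ≤ dist s_v r_u ∧
      (dist s_v r_v / dist s_u r_v) ^ α ≤
        4 ^ α * (dist s_u r_u / dist s_v r_u) ^ α := by
  have htri : dist s_v r_u ≤ dist s_v r_v + dist s_u r_v + dist s_u r_u := by
    have := dist_triangle4 s_v r_v s_u r_u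
    rw [dist_comm r_v s_u] at this
    linarith
  have hA : dist s_v r_u / 2 ≤ dist s_u r_v := by linarith
  have hB : 2 * dist s_u r_v / 3 ≤ dist s_v r_u := by
    have h3 : dist s_u r_v ≤ dist s_u r_u + dist s_v r_u + dist s_v r_v := by
      have := dist_triangle4 s_u r_u s_v r_v
      rw [dist_comm r_u s_v] at this
      linarith
    linarith
  refine ⟨hA, hB, ?_⟩
  have hdvu : 0 < dist s_v r_u := by linarith
  have hduv : 0 < dist s_u r_v := by linarith
  have hbase : dist s_v r_v / dist s_u r_v ≤ 4 * (dist s_u r_u / dist s_v r_u) := by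
    rw [show (4:ℝ) * (dist s_u r_u / dist s_v r_u) = 4 * dist s_u r_u / dist s_v r_u by ring,
      div_le_div_iff₀ hduv hdvu]
    nlinarith [mul_le_mul h2 hA (by linarith : (0:ℝ) ≤ dist s_v r_u / 2) (by linarith : (0:ℝ) ≤ 2 * dist s_v r_v)]
  calc (dist s_v r_v / dist s_u r_v) ^ α
      ≤ (4 * (dist s_u r_u / dist s_v r_u)) ^ α :=
        Real.rpow_le_rpow (by positivity) hbase hα.le
    _ = 4 ^ α * (dist s_u r_u / dist s_v r_u) ^ α :=
        Real.mul_rpow (by norm_num) (by positivity)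
end

section
/- (Independent-set reduction: feasibility characterization) Construct from a graph G = (V, E) on n vertices a unit-length link ℓ_v per vertex, with cross-distances d(s_u, r_v) = 1 if {u,v} ∈ E and d(s_u, r_v) = 2 otherwise; take N = 0, β = 3/2, and α ≥ log₂ n + 1. Then a set S ⊆ V is independent in G if and only if the corresponding links satisfy the SINR constraints: ∀ v ∈ S, β·∑_{u ∈ S, u ≠ v} (1/d(s_u,r_v))^α ≤ 1. -/
/-!
Interference between two links is `β = 3/2 > 1` across an edge and `β · 2^{-α}` otherwise.
A single edge inside `S` therefore already violates the SINR constraint at its endpoint,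
while in an independent set each of the at most `n` interferers contributes
`β · 2^{-α} ≤ β / (2n)`, so the total interference is at most `β / 2 < 1`.
-/

open Finset

namespace IndependentSetReduction

variable {V : Type*} (G : SimpleGraph V) [DecidableRel G.Adj] (α : ℝ)

/-- The affectance `β · d(s_u, r_v)^{-α}` with `β = 3/2`. -/
noncomputable def affectance (u v : V) : ℝ :=
  3 / 2 * ((if G.Adj u v then (1 : ℝ) else 2)⁻¹) ^ α

/-- The SINR constraints with zero noise. -/
def Feasible [DecidableEq V] (S : Finset V) : Prop :=
  ∀ v ∈ S, ∑ u ∈ S.erase v, affectance G α u v ≤ 1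

variable {G α}

theorem affectance_of_adj {u v : V} (h : G.Adj u v) : affectance G α u v = 3 / 2 := by
  simp [affectance, h]

theorem affectance_of_not_adj {u v : V} (h : ¬G.Adj u v) :
    affectance G α u v = 3 / 2 * (2 ^ α)⁻¹ := by
  simp [affectance, h, Real.inv_rpow]

theorem affectance_nonneg (u v : V) : 0 ≤ affectance G α u v := by
  unfold affectance
  positivity

theorem Feasible.not_adj [DecidableEq V] {S : Finset V} (hS : Feasible G α S)
    {u v : V} (hu : u ∈ S) (hv : v ∈ S) : ¬G.Adj u v := by
  intro hadj
  have hmem : u ∈ S.erase v := mem_erase.mpr ⟨G.ne_of_adj hadj, hu⟩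
  have hle : affectance G α u v ≤ ∑ w ∈ S.erase v, affectance G α w v :=
    single_le_sum (fun w _ => affectance_nonneg w v) hmem
  rw [affectance_of_adj hadj] at hle
  linarith [hS v hv]

theorem two_mul_le_two_rpow_of_logb_add_one_le {x : ℝ} (hx : 0 < x)
    (hα : Real.logb 2 x + 1 ≤ α) : 2 * x ≤ 2 ^ α :=
  calc 2 * x = 2 ^ (Real.logb 2 x + 1) := by
        rw [Real.rpow_add two_pos, Real.rpow_logb two_pos (by norm_num) hx, Real.rpow_one,
          mul_comm]
    _ ≤ 2 ^ α := Real.rpow_le_rpow_of_exponent_le (by norm_num) hα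

theorem feasible_of_independent [Fintype V] [DecidableEq V]
    (hα : Real.logb 2 (Fintype.card V) + 1 ≤ α) {S : Finset V}
    (hS : ∀ u ∈ S, ∀ v ∈ S, ¬G.Adj u v) : Feasible G α S := by
  intro v hv
  have hn : (0 : ℝ) < Fintype.card V := by exact_mod_cast Fintype.card_pos_iff.mpr ⟨v⟩
  have hcard : ((S.erase v).card : ℝ) ≤ Fintype.card V := by exact_mod_cast card_le_univ _
  have h2α : 2 * (Fintype.card V : ℝ) ≤ 2 ^ α := two_mul_le_two_rpow_of_logb_add_one_le hn hα
  calc ∑ u ∈ S.erase v, affectance G α u v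
      = ∑ _u ∈ S.erase v, 3 / 2 * (2 ^ α)⁻¹ :=
        sum_congr rfl fun u hu => affectance_of_not_adj (hS u (mem_of_mem_erase hu) v hv)
    _ = 3 / 2 * (S.erase v).card / 2 ^ α := by
        rw [sum_const, nsmul_eq_mul]
        ring
    _ ≤ 3 / 2 * Fintype.card V / (2 * Fintype.card V) := by gcongr
    _ ≤ 1 := by
        rw [div_le_one (by positivity)]
        linarith

end IndependentSetReduction

open IndependentSetReduction in
theorem independent_iff_feasible_general {V : Type*} [Fintype V] [DecidableEq V]
    (G : SimpleGraph V) [DecidableRel G.Adj]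
    (α : ℝ) (hα : Real.logb 2 (Fintype.card V) + 1 ≤ α)
    (S : Finset V) :
    (∀ u ∈ S, ∀ v ∈ S, ¬ G.Adj u v) ↔
      (∀ v ∈ S, ∑ u ∈ S.erase v,
        (3 / 2 : ℝ) * ((if G.Adj u v then (1 : ℝ) else 2)⁻¹) ^ α ≤ 1) :=
  show _ ↔ Feasible G α S from
    ⟨feasible_of_independent hα, fun hS _ hu _ hv => hS.not_adj hu hv⟩

/-- Independent-set reduction: with unit-length links, cross distance 1 between
adjacent vertices and 2 otherwise, `N = 0`, `β = 3/2` and `α ≥ log₂ n + 1`,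
a vertex set `S` is independent in `G` iff the corresponding links satisfy the
SINR constraints. -/
theorem independent_iff_feasible {V : Type*} [Fintype V] [DecidableEq V]
    (G : SimpleGraph V) [DecidableRel G.Adj]
    (hn : 1 ≤ Fintype.card V)
    (α : ℝ) (hα : Real.logb 2 (Fintype.card V) + 1 ≤ α)
    (S : Finset V) :
    (∀ u ∈ S, ∀ v ∈ S, ¬ G.Adj u v) ↔
      (∀ v ∈ S, ∑ u ∈ S.erase v,
        (3 / 2 : ℝ) * ((if G.Adj u v then (1 : ℝ) else 2)⁻¹) ^ α ≤ 1) :=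
  independent_iff_feasible_general G α hα S
end
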